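/- Let γ₁ > γ₂ > … > γ_p be ordinals and n₁, …, n_p, m₁, …, m_p natural numbers. Then (ω^{γ₁}·n₁ + ⋯ + ω^{γ_p}·n_p) ⊕ (ω^{γ₁}·m₁ + ⋯ + ω^{γ_p}·m_p) = ω^{γ₁}·(n₁+m₁) + ⋯ + ω^{γ_p}·(n_p+m_p), where ⊕ denotes the natural (Hessenberg) sum of ordinals, + between the displayed terms is ordinary ordinal addition, and ω^γ·n is ordinal exponentiation and multiplication. -/

import Mathlib

/-!
The natural sum is determined by its recursion
`c < a ♯ b ↔ (∃ a' < a, c ≤ a' ♯ b) ∨ ∃ b' < b, c ≤ a ♯ b'`.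
If `d` is closed under `♯`, the map `(X, Y) ↦ d * (X / d ♯ Y / d) + (X % d ♯ Y % d)` satisfies
the same recursion, so `(d * x + a) ♯ (d * y + b) = d * (x ♯ y) + (a ♯ b)` for `a, b < d`: quotients
and remainders are added separately. Each power `ω ^ γ` is closed under `♯`: by induction on `γ`,
since `a, b < ω ^ γ` lie below `ω ^ δ * ω` for some `δ < γ`, and this applies with `d = ω ^ δ`.
The theorem follows by splitting off the leading terms `ω ^ γ₁ * n₁` and `ω ^ γ₁ * m₁`, whose
tails lie below `ω ^ γ₁`.
-/

/-- The Cantor-normal-form style sum `ω^{γ 0} · n 0 + ⋯ + ω^{γ (p-1)} · n (p-1)`,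
with ordinary ordinal addition, summed in order of increasing index. -/
noncomputable def cnfSum (p : ℕ) (γ : Fin p → Ordinal) (n : Fin p → ℕ) : Ordinal :=
  (List.ofFn fun i => Ordinal.omega0 ^ (γ i) * (n i : Ordinal)).sum

namespace Ordinal

universe u

/-- Natural addition on ordinals `a ♯ b`, also known as the Hessenberg sum (the definition
formerly in Mathlib as `Ordinal.nadd`). -/
noncomputable def nadd : Ordinal.{u} → Ordinal.{u} → Ordinal.{u}
  | a, b =>
    max (blsub.{u, u} a fun a' _ => nadd a' b) (blsub.{u, u} b fun b' _ => nadd a b')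
termination_by o₁ o₂ => (o₁, o₂)

end Ordinal

open Ordinal Order

local infixl:65 " ♯ " => Ordinal.nadd

namespace Ordinal

theorem lt_nadd_iff {a b c : Ordinal} :
    a < b ♯ c ↔ (∃ b' < b, a ≤ b' ♯ c) ∨ ∃ c' < c, a ≤ b ♯ c' := by
  rw [nadd, lt_max_iff, lt_blsub_iff, lt_blsub_iff]
  simp only [exists_prop]

theorem nadd_le_iff {a b c : Ordinal} :
    b ♯ c ≤ a ↔ (∀ b' < b, b' ♯ c < a) ∧ ∀ c' < c, b ♯ c' < a := by
  rw [nadd, max_le_iff, blsub_le_iff, blsub_le_iff]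

theorem nadd_lt_nadd_right {b c : Ordinal} (h : b < c) (a : Ordinal) : b ♯ a < c ♯ a :=
  lt_nadd_iff.2 (.inl ⟨b, h, le_rfl⟩)

theorem nadd_lt_nadd_left {b c : Ordinal} (h : b < c) (a : Ordinal) : a ♯ b < a ♯ c :=
  lt_nadd_iff.2 (.inr ⟨b, h, le_rfl⟩)

theorem eq_nadd_of_lt_iff {f : Ordinal → Ordinal → Ordinal}
    (hf : ∀ a b c, c < f a b ↔ (∃ a' < a, c ≤ f a' b) ∨ ∃ b' < b, c ≤ f a b')
    (a b : Ordinal) : f a b = a ♯ b := by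
  induction a using WellFoundedLT.induction generalizing b with | _ a iha =>
  induction b using WellFoundedLT.induction with | _ b ihb =>
  refine eq_of_forall_lt_iff fun c => ?_
  rw [hf, lt_nadd_iff]
  refine or_congr (exists_congr fun a' => and_congr_right fun ha' => ?_)
    (exists_congr fun b' => and_congr_right fun hb' => ?_)
  · rw [iha a' ha']
  · rw [ihb b' hb']

theorem nadd_comm (a b : Ordinal) : a ♯ b = b ♯ a :=
  eq_nadd_of_lt_iff (f := fun a b => b ♯ a) (fun _ _ _ => lt_nadd_iff.trans or_comm) b a

theorem nadd_zero (a : Ordinal) : a ♯ 0 = a := by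
  induction a using WellFoundedLT.induction with | _ a ih =>
  refine eq_of_forall_lt_iff fun c => ?_
  simp only [lt_nadd_iff, not_lt_zero, false_and, exists_false, or_false]
  exact ⟨fun ⟨a', ha', hc⟩ => hc.trans_lt ((ih a' ha').trans_lt ha'),
    fun hc => ⟨c, hc, (ih c hc).ge⟩⟩

theorem le_self_nadd (a b : Ordinal) : a ≤ a ♯ b := by
  rcases eq_zero_or_pos b with rfl | hb
  · rw [nadd_zero]
  · exact (nadd_zero a).ge.trans (nadd_lt_nadd_left hb a).le

theorem le_nadd_self (a b : Ordinal) : b ≤ a ♯ b :=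
  nadd_comm a b ▸ le_self_nadd b a

theorem natCast_nadd_natCast (m n : ℕ) : (m : Ordinal) ♯ n = ((m + n : ℕ) : Ordinal) := by
  induction m using Nat.strong_induction_on generalizing n with | _ m ihm =>
  induction n using Nat.strong_induction_on with | _ n ihn =>
  apply le_antisymm
  · refine nadd_le_iff.2 ⟨fun a ha => ?_, fun b hb => ?_⟩
    · obtain ⟨k, rfl⟩ := lt_omega0.1 (ha.trans (natCast_lt_omega0 m))
      rw [Nat.cast_lt] at ha
      rw [ihm k ha, Nat.cast_lt]
      omega
    · obtain ⟨k, rfl⟩ := lt_omega0.1 (hb.trans (natCast_lt_omega0 n))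
      rw [Nat.cast_lt] at hb
      rw [ihn k hb, Nat.cast_lt]
      omega
  · cases n with
    | zero => simp [nadd_zero]
    | succ k =>
      have h := nadd_lt_nadd_left (Nat.cast_lt.2 k.lt_succ_self) (m : Ordinal)
      rw [ihn k k.lt_succ_self] at h
      exact_mod_cast Order.add_one_le_of_lt h

theorem mul_add_lt_mul_add_of_lt {d a b x y : Ordinal} (ha : a < d) (h : x < y) :
    d * x + a < d * y + b :=
  calc d * x + a < d * x + d := by gcongr
    _ = d * succ x := (mul_succ d x).symm
    _ ≤ d * y := by gcongr; exact succ_le_of_lt h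
    _ ≤ d * y + b := le_self_add

theorem mul_add_lt_mul_add_iff {d a b x y : Ordinal} (ha : a < d) (hb : b < d) :
    d * x + a < d * y + b ↔ x < y ∨ x = y ∧ a < b := by
  refine ⟨fun h => ?_, ?_⟩
  · rcases lt_trichotomy x y with hxy | rfl | hyx
    · exact .inl hxy
    · exact .inr ⟨rfl, lt_of_add_lt_add_left h⟩
    · exact absurd h (mul_add_lt_mul_add_of_lt hb hyx).not_gt
  · rintro (hxy | ⟨rfl, hab⟩)
    · exact mul_add_lt_mul_add_of_lt ha hxy
    · gcongr

noncomputable def naddDigits (d X Y : Ordinal) : Ordinal :=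
  d * (X / d ♯ Y / d) + (X % d ♯ Y % d)

section naddDigits

variable {d : Ordinal}

theorem exists_eq_mul_add (hd0 : d ≠ 0) (X : Ordinal) : ∃ x, ∃ a < d, X = d * x + a :=
  ⟨X / d, X % d, mod_lt X hd0, (div_add_mod X d).symm⟩

theorem naddDigits_mul_add {a b : Ordinal} (ha : a < d) (hb : b < d) (x y : Ordinal) :
    naddDigits d (d * x + a) (d * y + b) = d * (x ♯ y) + (a ♯ b) := by
  have hd0 : d ≠ 0 := (zero_le.trans_lt ha).ne'
  simp only [naddDigits, mul_add_div _ hd0, div_eq_zero_of_lt ha, div_eq_zero_of_lt hb,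
    add_zero, mul_add_mod_self, mod_eq_of_lt ha, mod_eq_of_lt hb]

theorem naddDigits_comm (X Y : Ordinal) : naddDigits d X Y = naddDigits d Y X := by
  simp only [naddDigits, nadd_comm]

theorem naddDigits_lt_naddDigits_left (hd : IsPrincipal nadd d) (hd0 : d ≠ 0)
    {X X' : Ordinal} (h : X' < X) (Y : Ordinal) : naddDigits d X' Y < naddDigits d X Y := by
  obtain ⟨x, a, ha, rfl⟩ := exists_eq_mul_add hd0 X
  obtain ⟨x', a', ha', rfl⟩ := exists_eq_mul_add hd0 X'
  obtain ⟨y, b, hb, rfl⟩ := exists_eq_mul_add hd0 Y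
  rw [naddDigits_mul_add ha hb, naddDigits_mul_add ha' hb,
    mul_add_lt_mul_add_iff (hd ha' hb) (hd ha hb)]
  rcases (mul_add_lt_mul_add_iff ha' ha).1 h with hx | ⟨rfl, ha'a⟩
  · exact .inl (nadd_lt_nadd_right hx y)
  · exact .inr ⟨rfl, nadd_lt_nadd_right ha'a b⟩

theorem exists_le_naddDigits_of_lt (hd : IsPrincipal nadd d) (hd0 : d ≠ 0) {X Y c : Ordinal}
    (hc : c < naddDigits d X Y) :
    (∃ X' < X, c ≤ naddDigits d X' Y) ∨ ∃ Y' < Y, c ≤ naddDigits d X Y' := by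
  obtain ⟨x, a, ha, rfl⟩ := exists_eq_mul_add hd0 X
  obtain ⟨y, b, hb, rfl⟩ := exists_eq_mul_add hd0 Y
  obtain ⟨t, r, hr, rfl⟩ := exists_eq_mul_add hd0 c
  rw [naddDigits_mul_add ha hb, mul_add_lt_mul_add_iff hr (hd ha hb)] at hc
  rcases hc with ht | ⟨rfl, hr⟩
  · rcases lt_nadd_iff.1 ht with ⟨x', hx', ht⟩ | ⟨y', hy', ht⟩
    · refine .inl ⟨d * x' + r, (mul_add_lt_mul_add_iff hr ha).2 (.inl hx'), ?_⟩
      rw [naddDigits_mul_add hr hb]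
      gcongr
      exact le_self_nadd r b
    · refine .inr ⟨d * y' + r, (mul_add_lt_mul_add_iff hr hb).2 (.inl hy'), ?_⟩
      rw [naddDigits_mul_add ha hr]
      gcongr
      exact le_nadd_self a r
  · rcases lt_nadd_iff.1 hr with ⟨a', ha', hr⟩ | ⟨b', hb', hr⟩
    · refine .inl ⟨d * x + a', (mul_add_lt_mul_add_iff (ha'.trans ha) ha).2 (.inr ⟨rfl, ha'⟩), ?_⟩
      rw [naddDigits_mul_add (ha'.trans ha) hb]
      gcongr
    · refine .inr ⟨d * y + b', (mul_add_lt_mul_add_iff (hb'.trans hb) hb).2 (.inr ⟨rfl, hb'⟩), ?_⟩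
      rw [naddDigits_mul_add ha (hb'.trans hb)]
      gcongr

theorem naddDigits_eq_nadd (hd : IsPrincipal nadd d) (hd0 : d ≠ 0) (X Y : Ordinal) :
    naddDigits d X Y = X ♯ Y := by
  refine eq_nadd_of_lt_iff (fun X Y c => ⟨exists_le_naddDigits_of_lt hd hd0, ?_⟩) X Y
  rintro (⟨X', hX', hc⟩ | ⟨Y', hY', hc⟩)
  · exact hc.trans_lt (naddDigits_lt_naddDigits_left hd hd0 hX' Y)
  · rw [naddDigits_comm] at hc ⊢
    exact hc.trans_lt (naddDigits_lt_naddDigits_left hd hd0 hY' X)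

theorem IsPrincipal.mul_add_nadd_mul_add (hd : IsPrincipal nadd d) {a b : Ordinal}
    (ha : a < d) (hb : b < d) (x y : Ordinal) :
    (d * x + a) ♯ (d * y + b) = d * (x ♯ y) + (a ♯ b) := by
  rw [← naddDigits_eq_nadd hd (zero_le.trans_lt ha).ne', naddDigits_mul_add ha hb]

theorem IsPrincipal.nadd_mul_omega0 (hd : IsPrincipal nadd d) : IsPrincipal nadd (d * ω) := by
  intro a b ha hb
  have hd0 : d ≠ 0 := by rintro rfl; simp at ha
  obtain ⟨m, hm⟩ := lt_omega0.1 ((lt_mul_iff_div_lt hd0).1 ha)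
  obtain ⟨n, hn⟩ := lt_omega0.1 ((lt_mul_iff_div_lt hd0).1 hb)
  rw [← div_add_mod a d, ← div_add_mod b d,
    hd.mul_add_nadd_mul_add (mod_lt a hd0) (mod_lt b hd0), hm, hn, natCast_nadd_natCast]
  calc d * ↑(m + n) + (a % d ♯ b % d) < d * ↑(m + n) + d := by
        gcongr; exact hd (mod_lt a hd0) (mod_lt b hd0)
    _ = d * ↑(m + n + 1) := by push_cast; rw [mul_add_one]
    _ < d * ω := by gcongr; exact natCast_lt_omega0 _

end naddDigits

theorem isPrincipal_nadd_omega0_opow (γ : Ordinal) : IsPrincipal nadd (ω ^ γ) := by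
  induction γ using WellFoundedLT.induction with | _ γ ih =>
  rcases eq_or_ne γ 0 with rfl | hγ
  · rw [opow_zero, isPrincipal_one_iff, nadd_zero]
  intro a b ha hb
  set δ := max (log ω a) (log ω b)
  have hδ : δ < γ := max_lt (lt_log_of_lt_opow hγ ha) (lt_log_of_lt_opow hγ hb)
  have hlt : ∀ c, log ω c ≤ δ → c < ω ^ δ * ω := fun c hc =>
    opow_succ ω δ ▸ (lt_opow_succ_log_self one_lt_omega0 c).trans_le
      (opow_le_opow_right omega0_pos (succ_le_succ hc))
  calc a ♯ b < ω ^ δ * ω :=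
        (ih δ hδ).nadd_mul_omega0 (hlt a (le_max_left _ _)) (hlt b (le_max_right _ _))
    _ = ω ^ succ δ := (opow_succ ω δ).symm
    _ ≤ ω ^ γ := opow_le_opow_right omega0_pos (succ_le_of_lt hδ)

end Ordinal

theorem cnfSum_succ (p : ℕ) (γ : Fin (p + 1) → Ordinal) (n : Fin (p + 1) → ℕ) :
    cnfSum (p + 1) γ n = ω ^ γ 0 * n 0 + cnfSum p (fun i => γ i.succ) (fun i => n i.succ) := by
  rw [cnfSum, List.ofFn_succ, List.sum_cons]
  rfl

theorem cnfSum_lt_omega0_opow {p : ℕ} {γ : Fin p → Ordinal} (n : Fin p → ℕ) {e : Ordinal}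
    (h : ∀ i, γ i < e) : cnfSum p γ n < ω ^ e := by
  induction p with
  | zero => simpa [cnfSum] using opow_pos e omega0_pos
  | succ p ih =>
    rw [cnfSum_succ]
    exact isPrincipal_add_omega0_opow e (opow_mul_lt_opow (natCast_lt_omega0 (n 0)) (h 0))
      (ih _ fun i => h i.succ)

/-- if `γ₁ > γ₂ > … > γ_p` are ordinals and `n i`, `m i` natural numbers, then
`(ω^{γ₁}·n₁ + ⋯ + ω^{γ_p}·n_p) ⊕ (ω^{γ₁}·m₁ + ⋯ + ω^{γ_p}·m_p)
  = ω^{γ₁}·(n₁+m₁) + ⋯ + ω^{γ_p}·(n_p+m_p)`,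
where `⊕` is the natural (Hessenberg) sum. -/
theorem stmt_18 (p : ℕ) (γ : Fin p → Ordinal) (hγ : ∀ i j : Fin p, i < j → γ j < γ i)
    (n m : Fin p → ℕ) :
    Ordinal.nadd (cnfSum p γ n) (cnfSum p γ m) = cnfSum p γ (fun i => n i + m i) := by
  induction p with
  | zero => simp [cnfSum, nadd_zero]
  | succ p ih =>
    have htail (k : Fin (p + 1) → ℕ) :
        cnfSum p (fun i => γ i.succ) (fun i => k i.succ) < ω ^ γ 0 :=
      cnfSum_lt_omega0_opow _ fun i => hγ 0 i.succ i.succ_pos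
    rw [cnfSum_succ, cnfSum_succ, cnfSum_succ,
      (isPrincipal_nadd_omega0_opow (γ 0)).mul_add_nadd_mul_add (htail n) (htail m),
      natCast_nadd_natCast,
      ih _ (fun i j hij => hγ i.succ j.succ (Fin.succ_lt_succ_iff.2 hij))]
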